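/- Let h : X → Y be a flip conjugacy between Smale spaces (X,φ) and (Y,ψ), and define η : X×X → Y×Y by η(x,z) = (h(x),h(z)). Then for every N ∈ ℕ there exists N' ∈ ℕ such that η(G_φ^{a,N}) ⊆ G_ψ^{a,N'} and η(G_φ^{a,N}) is an open subset of G_ψ^{a,N'} in the subspace topology that G_ψ^{a,N'} inherits from Y×Y. In particular η(G_φ^a) ⊆ G_ψ^a. -/

import Mathlib

open Filter Set Topology

noncomputable section

/-- Integer iterate of a homeomorphism. -/
def hIter {X : Type*} [TopologicalSpace X] (φ : X ≃ₜ X) (n : ℤ) (x : X) : X :=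
  ((φ.toEquiv : Equiv.Perm X) ^ n) x

/-- The cocycle sums `f^n` of a function `f : X → ℤ` along the iterates of `φ`:
`f^n(x) = Σ_{i=0}^{n-1} f(φ^i(x))` for `n > 0`, `f^0 = 0`, and
`f^n(x) = −Σ_{i=n}^{-1} f(φ^i(x))` for `n < 0`. -/
def cSum {X : Type*} [TopologicalSpace X] (φ : X ≃ₜ X) (f : X → ℤ) (n : ℤ) (x : X) : ℤ :=
  if 0 ≤ n then ∑ i ∈ Finset.range n.toNat, f (hIter φ i x)
  else -∑ i ∈ Finset.range (-n).toNat, f (hIter φ (n + i) x)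

/-- Stable asymptotic pairs (limit definition). -/
def asympS {X : Type*} [MetricSpace X] (φ : X ≃ₜ X) : Set (X × X) :=
  {p | Tendsto (fun n : ℕ => dist (hIter φ n p.1) (hIter φ n p.2)) atTop (nhds 0)}

/-- Unstable asymptotic pairs (limit definition). -/
def asympU {X : Type*} [MetricSpace X] (φ : X ≃ₜ X) : Set (X × X) :=
  {p | Tendsto (fun n : ℕ => dist (hIter φ (-(n : ℤ)) p.1) (hIter φ (-(n : ℤ)) p.2))
    atTop (nhds 0)}

/-- Asymptotic pairs (limit definition). -/
def asympA {X : Type*} [MetricSpace X] (φ : X ≃ₜ X) : Set (X × X) := asympS φ ∩ asympU φ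

/-- The `ω`-limit set of `x`. -/
def omegaSet {X : Type*} [MetricSpace X] (φ : X ≃ₜ X) (x : X) : Set X :=
  {z | ∃ n : ℕ → ℕ, StrictMono n ∧ Tendsto (fun i => hIter φ (n i) x) atTop (nhds z)}

/-- The `α`-limit set of `x`. -/
def alphaSet {X : Type*} [MetricSpace X] (φ : X ≃ₜ X) (x : X) : Set X :=
  {z | ∃ n : ℕ → ℤ, StrictAnti n ∧ Tendsto (fun i => hIter φ (n i) x) atTop (nhds z)}

/-- A Smale space structure on a compact metric space `X`. -/
structure SmaleSpace (X : Type*) [MetricSpace X] [CompactSpace X] where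
  phi : X ≃ₜ X
  eps : ℝ
  lam : ℝ
  br : X → X → X
  eps_pos : 0 < eps
  lam_pos : 0 < lam
  lam_lt_one : lam < 1
  br_cont : ContinuousOn (fun p : X × X => br p.1 p.2) {p : X × X | dist p.1 p.2 < eps}
  br_self : ∀ x : X, br x x = x
  br_assoc_left : ∀ x y z : X, dist x y < eps → dist (br x y) z < eps → dist x z < eps →
    br (br x y) z = br x z
  br_assoc_right : ∀ x y z : X, dist y z < eps → dist x (br y z) < eps → dist x z < eps →
    br x (br y z) = br x z
  phi_br : ∀ x y : X, dist x y < eps → dist (phi x) (phi y) < eps →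
    phi (br x y) = br (phi x) (phi y)
  contract_s : ∀ x y z : X, br y x = y → dist x y < eps → br z x = z → dist x z < eps →
    dist (phi y) (phi z) ≤ lam * dist y z
  contract_u : ∀ x y z : X, br x y = y → dist x y < eps → br x z = z → dist x z < eps →
    dist (phi.symm y) (phi.symm z) ≤ lam * dist y z

namespace SmaleSpace

variable {X Y : Type*} [MetricSpace X] [CompactSpace X] [MetricSpace Y] [CompactSpace Y]

/-- Local stable set `X^s(x,ε)`. -/
def Xs (S : SmaleSpace X) (x : X) (ε : ℝ) : Set X := {y | S.br y x = y ∧ dist x y < ε}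

/-- Local unstable set `X^u(x,ε)`. -/
def Xu (S : SmaleSpace X) (x : X) (ε : ℝ) : Set X := {y | S.br x y = y ∧ dist x y < ε}

def Gs0 (S : SmaleSpace X) : Set (X × X) := {p | p.2 ∈ S.Xs p.1 S.eps}

def Gu0 (S : SmaleSpace X) : Set (X × X) := {p | p.2 ∈ S.Xu p.1 S.eps}

/-- `G_φ^{s,n} = (φ×φ)^{-n}(G_φ^{s,0})`. -/
def GsN (S : SmaleSpace X) (n : ℤ) : Set (X × X) :=
  {p | (hIter S.phi n p.1, hIter S.phi n p.2) ∈ S.Gs0}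

/-- `G_φ^{u,n} = (φ×φ)^{n}(G_φ^{u,0})`. -/
def GuN (S : SmaleSpace X) (n : ℤ) : Set (X × X) :=
  {p | (hIter S.phi (-n) p.1, hIter S.phi (-n) p.2) ∈ S.Gu0}

def GaN (S : SmaleSpace X) (n : ℤ) : Set (X × X) := S.GsN n ∩ S.GuN n

/-- The asymptotic equivalence relation `G_φ^a = ⋃_{n ≥ 0} G_φ^{a,n}`. -/
def Ga (S : SmaleSpace X) : Set (X × X) := ⋃ n : ℕ, S.GaN n

lemma gaN_subset_ga (S : SmaleSpace X) (n : ℕ) : S.GaN n ⊆ S.Ga :=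
  Set.subset_iUnion (fun k : ℕ => S.GaN k) n

/-- The inductive limit topology on `G_φ^a`: a set is open iff its intersection with each
`G_φ^{a,n}` is open in the subspace topology from `X × X`. -/
def gaTopology (S : SmaleSpace X) : TopologicalSpace ↥S.Ga :=
  ⨆ n : ℕ, TopologicalSpace.coinduced (Set.inclusion (S.gaN_subset_ga n)) inferInstance

/-- Irreducibility of a Smale space. -/
def Irreducible (S : SmaleSpace X) : Prop :=
  ∀ U V : Set X, IsOpen U → U.Nonempty → IsOpen V → V.Nonempty →
    ∃ K : ℕ, ((hIter S.phi K '' U) ∩ V).Nonempty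

def IsPeriodicPoint (S : SmaleSpace X) (x : X) : Prop :=
  ∃ p : ℕ, 0 < p ∧ hIter S.phi p x = x

/-- `h` is a flip conjugacy between `(X,φ)` and `(Y,ψ)`. -/
def IsFlipConjugacy (S : SmaleSpace X) (T : SmaleSpace Y) (h : X ≃ₜ Y) : Prop :=
  (∀ x, h (S.phi x) = T.phi (h x)) ∨ (∀ x, h (S.phi x) = T.phi.symm (h x))

def FlipConjugate (S : SmaleSpace X) (T : SmaleSpace Y) : Prop :=
  ∃ h : X ≃ₜ Y, IsFlipConjugacy S T h

/-- An isomorphism of the principal étale groupoids `G_φ^a` and `G_ψ^a`: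
a bijection which is a homeomorphism for the inductive limit topologies and preserves
the (equivalence relation) groupoid structure. -/
structure GaIso (S : SmaleSpace X) (T : SmaleSpace Y) where
  toEquiv : ↥S.Ga ≃ ↥T.Ga
  cont : @Continuous _ _ S.gaTopology T.gaTopology toEquiv
  cont_symm : @Continuous _ _ T.gaTopology S.gaTopology toEquiv.symm
  map_mul : ∀ p q r : ↥S.Ga, (p : X × X).2 = (q : X × X).1 →
    (r : X × X) = ((p : X × X).1, (q : X × X).2) →
    (toEquiv p : Y × Y).2 = (toEquiv q : Y × Y).1 ∧
      (toEquiv r : Y × Y) = ((toEquiv p : Y × Y).1, (toEquiv q : Y × Y).2)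

end SmaleSpace

/-!
Local stable sets are detected by forward orbits: if the forward orbits of `a` and `b` stay
uniformly close, then the bracket `[a, b]` is unstably related to `a` with forward orbit close
to that of `a`, which forces `[a, b] = a` and hence `b ∈ X^s(a, ε)`. Since `h` is uniformly
continuous and forward orbits of a stable pair approach each other exponentially, `h × h` maps
`G_φ^{s,N}` into `G_ψ^{s,N+k}` for a fixed `k`. Reversing time turns unstable sets into stable
ones, which handles `G^{u,N}` and the flipped case `h ∘ φ = ψ⁻¹ ∘ h` alike.

For openness, `G_φ^{a,N}` is cut out of `G_φ^{a,N+j}` by the finitely many open conditions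
`d(φ^n x, φ^n y) < ε` and `d(φ^{-n} x, φ^{-n} y) < ε`, `N ≤ n < N + j`; pulling these back along
`h⁻¹ × h⁻¹`, which maps `G_ψ^{a,N+k}` into `G_φ^{a,N+k+k'}`, exhibits the image as relatively open.
-/

section Iterates

variable {X Y : Type*} [TopologicalSpace X] [TopologicalSpace Y]

lemma hIter_eq_coe_zpow (φ : X ≃ₜ X) (n : ℤ) : hIter φ n = ⇑(φ ^ n) := by
  ext x
  exact congrArg (· x)
    (map_zpow (⟨⟨Homeomorph.toEquiv, rfl⟩, fun _ _ => rfl⟩ : (X ≃ₜ X) →* Equiv.Perm X) φ n).symm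

lemma hIter_zero (φ : X ≃ₜ X) (x : X) : hIter φ 0 x = x := rfl

lemma hIter_add (φ : X ≃ₜ X) (m n : ℤ) (x : X) :
    hIter φ (m + n) x = hIter φ m (hIter φ n x) := by
  simp only [hIter_eq_coe_zpow, zpow_add, Homeomorph.mul_apply]

lemma hIter_succ (φ : X ≃ₜ X) (n : ℤ) (x : X) : hIter φ (n + 1) x = φ (hIter φ n x) := by
  rw [add_comm, hIter_add, hIter_eq_coe_zpow φ 1, zpow_one]

lemma hIter_natCast_succ (φ : X ≃ₜ X) (n : ℕ) (x : X) :
    hIter φ ((n + 1 : ℕ) : ℤ) x = φ (hIter φ n x) := by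
  rw [Nat.cast_succ, hIter_succ]

lemma hIter_neg_one (φ : X ≃ₜ X) (x : X) : hIter φ (-1) x = φ.symm x := by
  rw [hIter_eq_coe_zpow, zpow_neg_one, Homeomorph.inv_apply]

lemma hIter_neg_hIter (φ : X ≃ₜ X) (n : ℤ) (x : X) : hIter φ (-n) (hIter φ n x) = x := by
  rw [← hIter_add, neg_add_cancel, hIter_zero]

lemma hIter_symm (φ : X ≃ₜ X) (n : ℤ) (x : X) : hIter φ.symm n x = hIter φ (-n) x := by
  rw [hIter_eq_coe_zpow, hIter_eq_coe_zpow, zpow_neg, ← inv_zpow]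
  rfl

lemma continuous_hIter (φ : X ≃ₜ X) (n : ℤ) : Continuous (hIter φ n) := by
  rw [hIter_eq_coe_zpow]
  exact (φ ^ n).continuous

lemma Function.Semiconj.hIter {φ : X ≃ₜ X} {ψ : Y ≃ₜ Y} {h : X → Y}
    (hc : Function.Semiconj h φ ψ) (n : ℤ) (x : X) :
    h (_root_.hIter φ n x) = _root_.hIter ψ n (h x) := by
  have hc' : Function.Semiconj h φ.symm ψ.symm :=
    hc.inverses_right φ.rightInverse_symm ψ.leftInverse_symm
  induction n using Int.induction_on generalizing x with
  | zero => rfl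
  | succ k ih => rw [hIter_succ, hIter_succ, hc, ih]
  | pred k ih =>
    rw [sub_eq_add_neg, hIter_add, hIter_add, ih, hIter_neg_one, hIter_neg_one, hc']

end Iterates

namespace SmaleSpace

variable {X Y : Type*} [MetricSpace X] [CompactSpace X] [MetricSpace Y] [CompactSpace Y]

def rev (S : SmaleSpace X) : SmaleSpace X where
  phi := S.phi.symm
  eps := S.eps
  lam := S.lam
  br x y := S.br y x
  eps_pos := S.eps_pos
  lam_pos := S.lam_pos
  lam_lt_one := S.lam_lt_one
  br_cont := S.br_cont.comp continuous_swap.continuousOn fun p hp => by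
    simpa [dist_comm] using hp
  br_self := S.br_self
  br_assoc_left x y z h₁ h₂ h₃ := by
    rw [dist_comm] at h₁ h₂ h₃
    exact S.br_assoc_right z y x h₁ h₂ h₃
  br_assoc_right x y z h₁ h₂ h₃ := by
    rw [dist_comm] at h₁ h₂ h₃
    exact S.br_assoc_left z y x h₁ h₂ h₃
  phi_br x y h₁ h₂ := by
    rw [dist_comm] at h₁ h₂
    have key := S.phi_br (S.phi.symm y) (S.phi.symm x) h₂ (by simpa using h₁)
    rw [Homeomorph.apply_symm_apply, Homeomorph.apply_symm_apply] at key
    exact S.phi.toEquiv.symm_apply_eq.mpr key.symm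
  contract_s := S.contract_u
  contract_u x y z h₁ h₂ h₃ h₄ := by
    simpa using S.contract_s x y z h₁ h₂ h₃ h₄

variable (S : SmaleSpace X) {a b : X}

lemma hIter_rev (n : ℤ) (x : X) : hIter S.rev.phi n x = hIter S.phi (-n) x :=
  hIter_symm S.phi n x

lemma rev_GsN (n : ℤ) : S.rev.GsN n = S.GuN n := by
  ext p
  simp only [GsN, GuN, hIter_rev]
  rfl

lemma rev_GuN (n : ℤ) : S.rev.GuN n = S.GsN n := by
  ext p
  simp only [GsN, GuN, hIter_rev, neg_neg]
  rfl

lemma rev_GaN (n : ℤ) : S.rev.GaN n = S.GaN n := by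
  rw [GaN, GaN, rev_GsN, rev_GuN, inter_comm]

lemma dist_phi_le_of_mem_Gs0 (hab : (a, b) ∈ S.Gs0) :
    dist (S.phi a) (S.phi b) ≤ S.lam * dist a b := by
  rw [dist_comm, dist_comm a]
  exact S.contract_s a b a hab.1 hab.2 (S.br_self a) (by simpa using S.eps_pos)

lemma phi_mem_Gs0 (hab : (a, b) ∈ S.Gs0) : (S.phi a, S.phi b) ∈ S.Gs0 := by
  have hd : dist (S.phi a) (S.phi b) < S.eps :=
    (S.dist_phi_le_of_mem_Gs0 hab).trans_lt <|
      (mul_le_of_le_one_left dist_nonneg S.lam_lt_one.le).trans_lt hab.2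
  refine ⟨?_, hd⟩
  rw [dist_comm] at hd
  rw [← S.phi_br b a (by rw [dist_comm]; exact hab.2) hd, hab.1]

lemma mem_Gs0_of_phi_mem (hab : (S.phi a, S.phi b) ∈ S.Gs0) (hd : dist a b < S.eps) :
    (a, b) ∈ S.Gs0 := by
  refine ⟨S.phi.injective ?_, hd⟩
  rw [S.phi_br b a (by rwa [dist_comm]) (by rw [dist_comm]; exact hab.2), hab.1]

lemma hIter_mem_Gs0 (hab : (a, b) ∈ S.Gs0) (n : ℕ) :
    (hIter S.phi n a, hIter S.phi n b) ∈ S.Gs0 := by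
  induction n with
  | zero => exact hab
  | succ n ih =>
    rw [hIter_natCast_succ, hIter_natCast_succ]
    exact S.phi_mem_Gs0 ih

lemma dist_hIter_le_of_mem_Gs0 (hab : (a, b) ∈ S.Gs0) (n : ℕ) :
    dist (hIter S.phi n a) (hIter S.phi n b) ≤ S.lam ^ n * dist a b := by
  induction n with
  | zero => simp [hIter_zero]
  | succ n ih =>
    rw [hIter_natCast_succ, hIter_natCast_succ, pow_succ', mul_assoc]
    exact (S.dist_phi_le_of_mem_Gs0 (S.hIter_mem_Gs0 hab n)).trans
      (mul_le_mul_of_nonneg_left ih S.lam_pos.le)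

lemma eq_of_mem_Gu0_of_forall_dist_hIter_lt (hab : (a, b) ∈ S.Gu0)
    (hd : ∀ n : ℕ, dist (hIter S.phi n a) (hIter S.phi n b) < S.eps) : a = b := by
  have hGu : ∀ n : ℕ, (hIter S.phi n a, hIter S.phi n b) ∈ S.rev.Gs0 := by
    intro n
    induction n with
    | zero => exact hab
    | succ n ih =>
      have hd' := hd (n + 1)
      rw [hIter_natCast_succ, hIter_natCast_succ] at hd' ⊢
      refine S.rev.mem_Gs0_of_phi_mem ?_ hd'
      simpa [rev] using ih
  have hle : ∀ n : ℕ, dist a b ≤ S.lam ^ n * S.eps := fun n => by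
    have hcontr := S.rev.dist_hIter_le_of_mem_Gs0 (hGu n) n
    rw [hIter_rev, hIter_rev, hIter_neg_hIter, hIter_neg_hIter] at hcontr
    exact hcontr.trans (mul_le_mul_of_nonneg_left (hd n).le (pow_nonneg S.lam_pos.le n))
  have hlim : Tendsto (fun n : ℕ => S.lam ^ n * S.eps) atTop (𝓝 0) := by
    simpa using (tendsto_pow_atTop_nhds_zero_of_lt_one S.lam_pos.le S.lam_lt_one).mul_const S.eps
  exact dist_le_zero.1 (ge_of_tendsto' hlim hle)

lemma exists_pos_dist_br_lt {κ : ℝ} (hκ : 0 < κ) :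
    ∃ δ > 0, ∀ a b : X, dist a b < δ → dist (S.br a b) a < κ := by
  set K := {p : X × X | dist p.1 p.2 ≤ S.eps / 2}
  have hK : IsCompact K := (isClosed_le (by fun_prop) continuous_const).isCompact
  have hKeps : K ⊆ {p : X × X | dist p.1 p.2 < S.eps} :=
    fun p hp => hp.trans_lt (half_lt_self S.eps_pos)
  obtain ⟨δ, hδ, hbr⟩ := Metric.uniformContinuousOn_iff.1
    (hK.uniformContinuousOn_of_continuous (S.br_cont.mono hKeps)) κ hκ
  refine ⟨min δ (S.eps / 2), lt_min hδ (half_pos S.eps_pos), fun a b hab => ?_⟩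
  have hdiag : (a, a) ∈ K := by simpa [K] using (half_pos S.eps_pos).le
  have hclose : dist (a, b) (a, a) < δ := by
    simpa [Prod.dist_eq, dist_comm] using hab.trans_le (min_le_left _ _)
  simpa [S.br_self] using hbr (a, b) (hab.le.trans (min_le_right _ _)) (a, a) hdiag hclose

lemma exists_pos_mem_Gs0_of_forall_dist_hIter_lt :
    ∃ δ > 0, ∀ a b : X, (∀ n : ℕ, dist (hIter S.phi n a) (hIter S.phi n b) < δ) →
      (a, b) ∈ S.Gs0 := by
  have hε := S.eps_pos
  obtain ⟨δ, hδ, hbr⟩ := S.exists_pos_dist_br_lt (half_pos hε)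
  refine ⟨min δ (S.eps / 5), by positivity, fun a b hab => ?_⟩
  have hab5 : ∀ n : ℕ, dist (hIter S.phi n a) (hIter S.phi n b) < S.eps / 5 :=
    fun n => (hab n).trans_le (min_le_right _ _)
  have hdab : dist a b < S.eps / 5 := hab5 0
  have hwa : dist (S.br a b) a < S.eps / 2 := hbr a b ((hab 0).trans_le (min_le_left _ _))
  have hwb : dist (S.br a b) b < S.eps / 2 + S.eps / 5 := by
    linarith [dist_triangle (S.br a b) a b]
  have hu : (a, S.br a b) ∈ S.Gu0 :=
    ⟨S.br_assoc_right a a b (by linarith) (by rw [dist_comm]; linarith) (by linarith),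
      by rw [dist_comm]; linarith⟩
  have hs : (b, S.br a b) ∈ S.Gs0 :=
    ⟨S.br_assoc_left a b b (by linarith) (by linarith) (by linarith),
      by rw [dist_comm]; linarith⟩
  have horbit : ∀ n : ℕ,
      dist (hIter S.phi n a) (hIter S.phi n (S.br a b)) < S.eps := fun n => by
    have hbw : dist (hIter S.phi n b) (hIter S.phi n (S.br a b)) ≤ dist b (S.br a b) :=
      (S.dist_hIter_le_of_mem_Gs0 hs n).trans
        (mul_le_of_le_one_left dist_nonneg (pow_le_one₀ S.lam_pos.le S.lam_lt_one.le))
    linarith [dist_triangle (hIter S.phi n a) (hIter S.phi n b) (hIter S.phi n (S.br a b)),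
      hab5 n, dist_comm b (S.br a b)]
  have hfix : S.br a b = a := (S.eq_of_mem_Gu0_of_forall_dist_hIter_lt hu horbit).symm
  refine ⟨?_, by linarith⟩
  have hba := S.br_assoc_right b a b (by linarith) (by rw [hfix, dist_comm]; linarith)
    (by simpa using hε)
  rwa [hfix, S.br_self] at hba

lemma eventually_mapsTo_GsN_of_semiconj (T : SmaleSpace Y) {h : X ≃ₜ Y}
    (hc : Function.Semiconj h S.phi T.phi) :
    ∀ᶠ k : ℕ in atTop, ∀ N : ℤ,
      MapsTo (fun p : X × X => (h p.1, h p.2)) (S.GsN N) (T.GsN (N + k)) := by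
  obtain ⟨δY, hδY, hcrit⟩ := T.exists_pos_mem_Gs0_of_forall_dist_hIter_lt
  obtain ⟨δX, hδX, hh⟩ := Metric.uniformContinuous_iff.1
    (CompactSpace.uniformContinuous_of_continuous h.continuous) δY hδY
  obtain ⟨m, hm⟩ := exists_pow_lt_of_lt_one (div_pos hδX S.eps_pos) S.lam_lt_one
  refine eventually_atTop.2 ⟨m, fun k hk N p hp => hcrit _ _ fun n => ?_⟩
  have htail : dist (hIter S.phi (↑(k + n) + N) p.1) (hIter S.phi (↑(k + n) + N) p.2) < δX :=
    calc _ ≤ S.lam ^ (k + n) * dist (hIter S.phi N p.1) (hIter S.phi N p.2) := by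
          simpa only [hIter_add] using S.dist_hIter_le_of_mem_Gs0 hp (k + n)
      _ ≤ S.lam ^ m * S.eps :=
          mul_le_mul (pow_le_pow_of_le_one S.lam_pos.le S.lam_lt_one.le (by omega)) hp.2.le
            dist_nonneg (pow_nonneg S.lam_pos.le m)
      _ < δX := (lt_div_iff₀ S.eps_pos).1 hm
  have htime : (n : ℤ) + (N + k) = ↑(k + n) + N := by push_cast; ring
  rw [← hIter_add, ← hIter_add, htime, ← hc.hIter, ← hc.hIter]
  exact hh htail

lemma eventually_mapsTo_GaN_of_semiconj (T : SmaleSpace Y) {h : X ≃ₜ Y}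
    (hc : Function.Semiconj h S.phi T.phi) :
    ∀ᶠ k : ℕ in atTop, ∀ N : ℤ,
      MapsTo (fun p : X × X => (h p.1, h p.2)) (S.GaN N) (T.GaN (N + k)) := by
  have hc' : Function.Semiconj h S.rev.phi T.rev.phi :=
    hc.inverses_right S.phi.rightInverse_symm T.phi.leftInverse_symm
  filter_upwards [S.eventually_mapsTo_GsN_of_semiconj T hc,
    S.rev.eventually_mapsTo_GsN_of_semiconj T.rev hc'] with k hs hu N
  simp only [rev_GsN] at hu
  exact (hs N).inter_inter (hu N)

section FlipConjugacy

variable {S} {T : SmaleSpace Y} {h : X ≃ₜ Y}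

lemma IsFlipConjugacy.symm (hflip : IsFlipConjugacy S T h) : IsFlipConjugacy T S h.symm := by
  rcases hflip with hc | hc
  · exact Or.inl (Function.Semiconj.inverse_left hc h.symm_apply_apply h.apply_symm_apply)
  · have hc' := Function.Semiconj.inverse_left hc h.symm_apply_apply h.apply_symm_apply
    exact Or.inr (hc'.inverses_right T.phi.symm_apply_apply S.phi.symm_apply_apply)

lemma IsFlipConjugacy.eventually_mapsTo_GaN (hflip : IsFlipConjugacy S T h) :
    ∀ᶠ k : ℕ in atTop, ∀ N : ℤ,
      MapsTo (fun p : X × X => (h p.1, h p.2)) (S.GaN N) (T.GaN (N + k)) := by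
  rcases hflip with hc | hc
  · exact S.eventually_mapsTo_GaN_of_semiconj T hc
  · simpa only [rev_GaN] using S.eventually_mapsTo_GaN_of_semiconj T.rev hc

end FlipConjugacy

def EpsClose (n : ℤ) : Set (X × X) :=
  {p | dist (hIter S.phi n p.1) (hIter S.phi n p.2) < S.eps}

lemma isOpen_EpsClose (n : ℤ) : IsOpen (S.EpsClose n) :=
  isOpen_lt (((continuous_hIter S.phi n).comp continuous_fst).dist
    ((continuous_hIter S.phi n).comp continuous_snd)) continuous_const

lemma GsN_eq_EpsClose_inter_GsN_add_one (n : ℤ) :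
    S.GsN n = S.EpsClose n ∩ S.GsN (n + 1) := by
  ext p
  simp only [GsN, EpsClose, mem_ofPred_eq, mem_inter_iff, hIter_succ]
  exact ⟨fun hp => ⟨hp.2, S.phi_mem_Gs0 hp⟩, fun hp => S.mem_Gs0_of_phi_mem hp.2 hp.1⟩

lemma GuN_eq_EpsClose_inter_GuN_add_one (n : ℤ) :
    S.GuN n = S.rev.EpsClose n ∩ S.GuN (n + 1) := by
  simpa only [rev_GsN] using S.rev.GsN_eq_EpsClose_inter_GsN_add_one n

lemma GaN_eq_EpsClose_inter_GaN_add_one (n : ℤ) :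
    S.GaN n = (S.EpsClose n ∩ S.rev.EpsClose n) ∩ S.GaN (n + 1) := by
  rw [GaN, GaN, S.GsN_eq_EpsClose_inter_GsN_add_one, S.GuN_eq_EpsClose_inter_GuN_add_one,
    inter_inter_inter_comm]

lemma exists_isOpen_GaN_eq_inter (N : ℤ) (j : ℕ) :
    ∃ O : Set (X × X), IsOpen O ∧ S.GaN N = O ∩ S.GaN (N + j) := by
  induction j with
  | zero => exact ⟨univ, isOpen_univ, by simp⟩
  | succ j ih =>
    obtain ⟨O, hO, hN⟩ := ih
    refine ⟨O ∩ (S.EpsClose (N + j) ∩ S.rev.EpsClose (N + j)),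
      hO.inter ((S.isOpen_EpsClose _).inter (S.rev.isOpen_EpsClose _)), ?_⟩
    rw [hN, S.GaN_eq_EpsClose_inter_GaN_add_one (N + j), Nat.cast_succ, ← add_assoc]
    simp only [inter_assoc]

end SmaleSpace

lemma Homeomorph.isOpen_preimage_val_image {α β : Type*} [TopologicalSpace α]
    [TopologicalSpace β] (e : α ≃ₜ β) {s u O : Set α} {t : Set β} (hO : IsOpen O)
    (hs : s = O ∩ u) (ht : MapsTo e.symm t u) : IsOpen ((↑) ⁻¹' (e '' s) : Set t) := by
  refine isOpen_induced_iff.2 ⟨e.symm ⁻¹' O, hO.preimage e.symm.continuous, ?_⟩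
  ext q
  simp [e.image_eq_preimage_symm, hs, ht q.2]

/-- For a flip conjugacy `h`, the map `η(x,z) = (h(x),h(z))` maps each
`G_φ^{a,N}` into some `G_ψ^{a,N'}` with open image in the subspace topology of
`G_ψ^{a,N'}`; in particular `η(G_φ^a) ⊆ G_ψ^a`. -/
theorem flipConjugacy_gaN_image_open {X Y : Type*} [MetricSpace X] [CompactSpace X]
    [MetricSpace Y] [CompactSpace Y] (S : SmaleSpace X) (T : SmaleSpace Y)
    (h : X ≃ₜ Y) (hflip : SmaleSpace.IsFlipConjugacy S T h) :
    (∀ N : ℕ, ∃ N' : ℕ,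
      ((fun p : X × X => (h p.1, h p.2)) '' S.GaN (N : ℤ) ⊆ T.GaN (N' : ℤ)) ∧
      IsOpen {q : ↥(T.GaN (N' : ℤ)) |
        (q : Y × Y) ∈ (fun p : X × X => (h p.1, h p.2)) '' S.GaN (N : ℤ)}) ∧
    (fun p : X × X => (h p.1, h p.2)) '' S.Ga ⊆ T.Ga := by
  obtain ⟨k, hk⟩ := hflip.eventually_mapsTo_GaN.exists
  obtain ⟨k', hk'⟩ := hflip.symm.eventually_mapsTo_GaN.exists
  have hmaps (N : ℕ) : MapsTo (fun p : X × X => (h p.1, h p.2)) (S.GaN N) (T.GaN ↑(N + k)) := by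
    rw [Nat.cast_add]
    exact hk N
  refine ⟨fun N => ⟨N + k, (hmaps N).image_subset, ?_⟩, ?_⟩
  · obtain ⟨O, hO, hNO⟩ := S.exists_isOpen_GaN_eq_inter N (k + k')
    refine (h.prodCongr h).isOpen_preimage_val_image hO hNO fun q hq => ?_
    have hq' := hk' _ hq
    rw [Nat.cast_add, add_assoc, ← Nat.cast_add] at hq'
    exact hq'
  · rintro _ ⟨p, hp, rfl⟩
    obtain ⟨N, hN⟩ := mem_iUnion.1 hp
    exact mem_iUnion.2 ⟨N + k, hmaps N hN⟩
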